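/- Let S be a collection of strings and let M = {{x_1,y_1},…,{x_h,y_h}} be a matching of pairs of distinct strings of S with |overlap(x_i, y_i)| > 0 for each i. If h ≥ r, then S has a superstring of length at most (Σ_{z∈S}|z|) − r. -/

import Mathlib

/-!
Merging each matched pair `(x, y)` along its overlap gives a string containing both and
saving `ovLen x y ≥ 1` symbols. Concatenating these merged strings with all unmatched strings
of `S` yields a superstring of `S` whose length is `∑ |z|` minus the total overlap of the
matching, hence at most `∑ |z| - h ≤ ∑ |z| - r`.
-/

open List

variable {α : Type*} [DecidableEq α]

/-- The length of the longest suffix of `s` that is also a prefix of `t`. -/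
def ovLen (s t : List α) : ℕ :=
  Nat.findGreatest (fun i => s.drop (s.length - i) = t.take i) (min s.length t.length)

theorem length_le_sum_map_of_pos {β : Type*} {l : List β} {f : β → ℕ}
    (hf : ∀ b ∈ l, 0 < f b) : l.length ≤ (l.map f).sum := by
  rw [← length_map f]
  exact length_le_sum_of_one_le _ fun n hn => by
    obtain ⟨b, hb, rfl⟩ := mem_map.1 hn
    exact hf b hb

theorem drop_length_sub_ovLen (s t : List α) :
    s.drop (s.length - ovLen s t) = t.take (ovLen s t) :=
  Nat.findGreatest_spec (P := fun i => s.drop (s.length - i) = t.take i)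
    (Nat.zero_le _) (by simp)

theorem ovLen_le_length_left (s t : List α) : ovLen s t ≤ s.length :=
  (Nat.findGreatest_le _).trans (min_le_left _ _)

def mergeOv (s t : List α) : List α :=
  s.take (s.length - ovLen s t) ++ t

theorem prefix_mergeOv (s t : List α) : s <+: mergeOv s t := by
  refine ⟨t.drop (ovLen s t), ?_⟩
  have hsplit := take_append_drop (s.length - ovLen s t) s
  rw [drop_length_sub_ovLen] at hsplit
  nth_rewrite 1 [← hsplit]
  rw [mergeOv, append_assoc, take_append_drop]

theorem suffix_mergeOv (s t : List α) : t <:+ mergeOv s t :=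
  suffix_append _ _

theorem length_mergeOv_add_ovLen (s t : List α) :
    (mergeOv s t).length + ovLen s t = s.length + t.length := by
  have := ovLen_le_length_left s t
  simp only [mergeOv, length_append, length_take]
  omega

theorem infix_flatten_map_mergeOv {M : List (List α × List α)} {x : List α}
    (hx : x ∈ M.flatMap fun p => [p.1, p.2]) :
    x <:+: (M.map fun p => mergeOv p.1 p.2).flatten := by
  obtain ⟨p, hp, hxp⟩ := mem_flatMap.1 hx
  have hmerge : mergeOv p.1 p.2 <:+: (M.map fun p => mergeOv p.1 p.2).flatten :=
    infix_of_mem_flatten (mem_map_of_mem hp)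
  rcases mem_pair.1 hxp with rfl | rfl
  · exact (prefix_mergeOv _ _).isInfix.trans hmerge
  · exact (suffix_mergeOv _ _).isInfix.trans hmerge

theorem length_flatten_map_mergeOv_add_sum_ovLen (M : List (List α × List α)) :
    (M.map fun p => mergeOv p.1 p.2).flatten.length + (M.map fun p => ovLen p.1 p.2).sum =
      ((M.flatMap fun p => [p.1, p.2]).map length).sum := by
  induction M with
  | nil => simp
  | cons p M ih =>
    have hp := length_mergeOv_add_ovLen p.1 p.2
    simp only [map_cons, flatten_cons, length_append, sum_cons, flatMap_cons, map_append,
      sum_append, map_nil, sum_nil] at ih ⊢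
    omega

/-- if M = {{x_1,y_1},…,{x_h,y_h}} is a matching of pairs of distinct
strings of S with |overlap(x_i,y_i)| > 0 for each i and h ≥ r, then S has a
superstring of length at most (Σ_{z∈S}|z|) − r. -/
theorem superstring_of_matching (S : List (List α)) (M : List (List α × List α)) (r : ℕ)
    (hsub : (M.flatMap fun p => [p.1, p.2]).Subperm S)
    (hov : ∀ p ∈ M, 0 < ovLen p.1 p.2)
    (hM : r ≤ M.length) :
    ∃ s : List α, (∀ x ∈ S, x <:+: s) ∧
      s.length + r ≤ (S.map List.length).sum := by
  obtain ⟨matched, hperm, hsubl⟩ := hsub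
  obtain ⟨rest, hS⟩ := hsubl.exists_perm_append
  have hS : S ~ (M.flatMap fun p => [p.1, p.2]) ++ rest := hS.trans (hperm.append_right rest)
  refine ⟨(M.map fun p => mergeOv p.1 p.2).flatten ++ rest.flatten, fun x hx => ?_, ?_⟩
  · rcases mem_append.1 (hS.subset hx) with hx | hx
    · exact (infix_flatten_map_mergeOv hx).trans (prefix_append _ _).isInfix
    · exact (infix_of_mem_flatten hx).trans (suffix_append _ _).isInfix
  · have hsaving : M.length ≤ (M.map fun p => ovLen p.1 p.2).sum := length_le_sum_map_of_pos hov
    have hlen := length_flatten_map_mergeOv_add_sum_ovLen M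
    rw [(hS.map length).sum_eq, map_append, sum_append, length_append, length_flatten (L := rest)]
    omega
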